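/- Let μ = (B2', H1', u) be a piece-unifier of R2 with R1 satisfying the stability property. Then the compact composition R2 •_μ R1, defined as the formula ∀x1' ∀y1 ∃z1 ∀x2' ∀y2' (u(B1) ∧ u(B2\B2') → ∃z2 (u(H1) ∧ u(H2))), is logically equivalent to the existential composition R2 ∘_μ R1 = ∀ (u(B1) ∧ u(B2\B2') → ∃ (u(H1) ∧ u(H2))), where in the latter all universal quantifiers precede all existential quantifiers. -/

import Mathlib

open scoped Classical
noncomputable section

namespace ER

/-- Terms: constants or variables (variables occurring in instances are called nulls). -/
inductive Term where
  | const : ℕ → Term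
  | var : ℕ → Term
deriving DecidableEq

def Term.isConst : Term → Prop
  | .const _ => True
  | .var _ => False

/-- An atom `p(t₁,…,tₙ)`. -/
structure Atom where
  pred : ℕ
  args : List Term
deriving DecidableEq

def Atom.terms (a : Atom) : Set Term := {t | t ∈ a.args}
def Atom.vars (a : Atom) : Set ℕ := {v | Term.var v ∈ a.args}

def termsOf (S : Set Atom) : Set Term := ⋃ a ∈ S, a.terms
def varsOf (S : Set Atom) : Set ℕ := ⋃ a ∈ S, a.vars
/-- The nulls (non-constant terms) occurring in a set of atoms. -/
def nullsOf (S : Set Atom) : Set Term := {t | t ∈ termsOf S ∧ ¬ t.isConst}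

def Term.subst (σ : ℕ → Term) : Term → Term
  | .const c => .const c
  | .var v => σ v

def Atom.subst (σ : ℕ → Term) (a : Atom) : Atom := ⟨a.pred, a.args.map (Term.subst σ)⟩
def substSet (σ : ℕ → Term) (S : Set Atom) : Set Atom := (Atom.subst σ) '' S

/-- A homomorphism from `S1` to `S2`: a substitution of variables by terms mapping `S1` into `S2`. -/
def isHom (σ : ℕ → Term) (S1 S2 : Set Atom) : Prop := substSet σ S1 ⊆ S2

/-- An injective homomorphism (injective on the terms of the source). -/
def isInjHom (σ : ℕ → Term) (S1 S2 : Set Atom) : Prop :=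
  isHom σ S1 S2 ∧ Set.InjOn (Term.subst σ) (termsOf S1)

/-- An instance is a finite set of ground atoms. -/
def IsInstance (I : Set Atom) : Prop := I.Finite ∧ ∀ t ∈ termsOf I, t.isConst

/-- An existential rule, given by its body and head. -/
structure Rule where
  body : Set Atom
  head : Set Atom

def Rule.frontier (R : Rule) : Set ℕ := varsOf R.body ∩ varsOf R.head
def Rule.exist (R : Rule) : Set ℕ := varsOf R.head \ varsOf R.body

/-- Well-formed rule: finite non-empty body and head, no constants. -/
def WfRule (R : Rule) : Prop :=
  R.body.Finite ∧ R.head.Finite ∧ R.body.Nonempty ∧ R.head.Nonempty ∧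
  ∀ t ∈ termsOf (R.body ∪ R.head), ¬ t.isConst

def WfList (L : List Rule) : Prop := ∀ R ∈ L, WfRule R

/-- Restriction of a substitution to a set of variables (default value elsewhere). -/
def restrict (f : ℕ → Term) (F : Set ℕ) : ℕ → Term :=
  fun v => if v ∈ F then f v else Term.const 0

/-- A semi-oblivious naming of nulls for the rules of `L`: the null created for an
existential variable depends only on the rule and the restriction of the trigger to the
frontier, and distinct such data yield distinct nulls. -/
def SONaming (L : List Rule) (ν : Rule → (ℕ → Term) → ℕ → ℕ) : Prop :=
  (∀ R ∈ L, ∀ f g : ℕ → Term,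
      restrict f R.frontier = restrict g R.frontier → ν R f = ν R g) ∧
  (∀ R ∈ L, ∀ R' ∈ L, ∀ f f' x x', ν R f x = ν R' f' x' →
      R = R' ∧ restrict f R.frontier = restrict f' R'.frontier ∧ x = x')

/-- The safe extension of a trigger `π`, replacing each existential variable by its null. -/
def safeSub (ν : Rule → (ℕ → Term) → ℕ → ℕ) (R : Rule) (π : ℕ → Term) : ℕ → Term :=
  fun y => if y ∈ R.exist then Term.var (ν R (restrict π R.frontier) y) else π y

/-- One breadth-first semi-oblivious chase step. -/
def chaseStep (ν : Rule → (ℕ → Term) → ℕ → ℕ) (L : List Rule) (S : Set Atom) : Set Atom :=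
  S ∪ {a | ∃ R ∈ L, ∃ π : ℕ → Term, isHom π R.body S ∧ a ∈ substSet (safeSub ν R π) R.head}

/-- The breadth-first semi-oblivious chase. -/
def chaseF (ν : Rule → (ℕ → Term) → ℕ → ℕ) (L : List Rule) (I : Set Atom) : ℕ → Set Atom
  | 0 => I
  | k + 1 => chaseStep ν L (chaseF ν L I k)

def chaseInf (ν : Rule → (ℕ → Term) → ℕ → ℕ) (L : List Rule) (I : Set Atom) : Set Atom :=
  ⋃ k, chaseF ν L I k

/-- `L'` parallelises `L`. -/
def Parallelises (L' L : List Rule) : Prop :=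
  ∀ ν ν', SONaming L ν → SONaming L' ν' → ∀ I, IsInstance I →
    (∃ σ, isInjHom σ (chaseInf ν L I) (chaseF ν' L' I 1)) ∧
    (∃ σ, isHom σ (chaseF ν' L' I 1) (chaseInf ν L I))

def Parallelisable (L : List Rule) : Prop := ∃ L', WfList L' ∧ Parallelises L' L

/-- Boundedness of the semi-oblivious chase, uniformly over all instances. -/
def Bounded (L : List Rule) : Prop :=
  ∃ k, ∀ ν, SONaming L ν → ∀ I, IsInstance I → chaseF ν L I k = chaseInf ν L I

def ChaseFinite (L : List Rule) : Prop :=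
  ∀ ν, SONaming L ν → ∀ I, IsInstance I → ∃ k, chaseF ν L I k = chaseInf ν L I

/-- Two atoms are `T`-linked if they share a term of `T`. -/
def linked (T : Set Term) (a b : Atom) : Prop := ∃ t ∈ T, t ∈ a.terms ∧ t ∈ b.terms

/-- Connectivity in `S` by a path of atoms where consecutive atoms share a term of `T`. -/
def connectedIn (S : Set Atom) (T : Set Term) (a b : Atom) : Prop :=
  a ∈ S ∧ b ∈ S ∧ Relation.ReflTransGen (fun x y => x ∈ S ∧ y ∈ S ∧ linked T x y) a b

/-- `P` is closed in `S` w.r.t. `T`-linkedness. -/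
def closedIn (S : Set Atom) (T : Set Term) (P : Set Atom) : Prop :=
  ∀ a ∈ S, ∀ b ∈ P, linked T a b → a ∈ P

/-- A piece of `S` w.r.t. `T`: a non-empty subset closed under `T`-linkedness and minimal such. -/
def IsPiece (S : Set Atom) (T : Set Term) (P : Set Atom) : Prop :=
  P.Nonempty ∧ P ⊆ S ∧ closedIn S T P ∧
  ∀ P', P' ⊆ P → P'.Nonempty → closedIn S T P' → P' = P

/-- A single-piece rule: its head is a piece of itself w.r.t. its existential variables. -/
def SinglePiece (R : Rule) : Prop := IsPiece R.head (Term.var '' R.exist) R.head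

/-- The rule used at step `k` of a derivation. -/
def ruleAt (L : List Rule) (r : ℕ → ℕ) (k : ℕ) : Rule := L.getD (r k) ⟨∅, ∅⟩

/-- The set of atoms produced by the `k`-th rule application of a derivation. -/
def producedAt (ν : Rule → (ℕ → Term) → ℕ → ℕ) (L : List Rule) (r : ℕ → ℕ)
    (π : ℕ → ℕ → Term) (k : ℕ) : Set Atom :=
  substSet (safeSub ν (ruleAt L r k) (π k)) (ruleAt L r k).head

def derivState (ν : Rule → (ℕ → Term) → ℕ → ℕ) (L : List Rule) (I : Set Atom)
    (r : ℕ → ℕ) (π : ℕ → ℕ → Term) : ℕ → Set Atom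
  | 0 => I
  | k + 1 => derivState ν L I r π k ∪ producedAt ν L r π k

/-- An `R`-derivation of length `n` from `I`: each step applies a trigger. -/
def IsDeriv (ν : Rule → (ℕ → Term) → ℕ → ℕ) (L : List Rule) (I : Set Atom) (n : ℕ)
    (r : ℕ → ℕ) (π : ℕ → ℕ → Term) : Prop :=
  ∀ k < n, r k < L.length ∧ isHom (π k) (ruleAt L r k).body (derivState ν L I r π k)

/-- A pieceful derivation: each trigger maps its rule's frontier entirely into the terms of
the initial instance, or entirely into the terms produced by a single earlier application. -/
def PiecefulDeriv (ν : Rule → (ℕ → Term) → ℕ → ℕ) (L : List Rule) (I : Set Atom) (n : ℕ)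
    (r : ℕ → ℕ) (π : ℕ → ℕ → Term) : Prop :=
  ∀ k < n, (∀ x ∈ (ruleAt L r k).frontier, π k x ∈ termsOf I) ∨
    ∃ j < k, ∀ x ∈ (ruleAt L r k).frontier, π k x ∈ termsOf (producedAt ν L r π j)

/-- A pieceful rule set: every derivation from every instance is pieceful. -/
def PiecefulSet (L : List Rule) : Prop :=
  ∀ ν, SONaming L ν → ∀ I, IsInstance I → ∀ n r π,
    IsDeriv ν L I n r π → PiecefulDeriv ν L I n r π

/-- First-order structures for the semantics of rules. -/
structure Struct where
  D : Type
  nonempty : Nonempty D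
  interp : ℕ → List D → Prop
  cinterp : ℕ → D

def evalT (M : Struct) (v : ℕ → M.D) : Term → M.D
  | .const c => M.cinterp c
  | .var x => v x

def holdsA (M : Struct) (v : ℕ → M.D) (a : Atom) : Prop :=
  M.interp a.pred (a.args.map (evalT M v))

/-- Satisfaction of (the universal-existential closure of) a rule in a structure. -/
def satRule (M : Struct) (R : Rule) : Prop :=
  ∀ v : ℕ → M.D, (∀ a ∈ R.body, holdsA M v a) →
    ∃ w : ℕ → M.D, (∀ x ∈ varsOf R.body, w x = v x) ∧ ∀ a ∈ R.head, holdsA M w a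

/-- Separating variables of `S' ⊆ S`: variables occurring both in `S'` and in `S \ S'`. -/
def sepVars (S' S : Set Atom) : Set ℕ := varsOf S' ∩ varsOf (S \ S')

/-- A piece-unifier `(S', H', u)` of a set of atoms `S` with a rule `R`. -/
def IsPieceUnifier (S : Set Atom) (R : Rule) (S' H' : Set Atom) (u : ℕ → Term) : Prop :=
  Disjoint (varsOf S) (varsOf (R.body ∪ R.head)) ∧
  S'.Nonempty ∧ S' ⊆ S ∧ H' ⊆ R.head ∧
  (∀ x, x ∉ R.frontier ∪ varsOf S' → u x = Term.var x) ∧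
  (∀ x ∈ R.frontier ∪ varsOf S', ∃ y ∈ varsOf R.head, u x = Term.var y) ∧
  (∀ x ∈ R.frontier, ∃ y ∈ R.frontier, u x = Term.var y) ∧
  (∀ x ∈ sepVars S' S, ∃ y ∈ R.frontier, u x = Term.var y) ∧
  substSet u S' = substSet u H'

/-- The existential stability property of a piece-unifier of `body R2` with `R1`. -/
def StableUnifier (R2 R1 : Rule) (B2' : Set Atom) (u : ℕ → Term) : Prop :=
  (∀ x ∈ R2.frontier, u x ∉ Term.var '' R1.exist) ∨ R2.frontier ⊆ varsOf B2'

/-- The existential composition `R2 ∘_μ R1` w.r.t. a piece-unifier `μ = (B2', H1', u)`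
of `body R2` with `R1`. -/
def compose (R2 R1 : Rule) (B2' : Set Atom) (u : ℕ → Term) : Rule :=
  if ∀ x ∈ R2.frontier, u x ∉ Term.var '' R1.exist then
    ⟨substSet u R1.body ∪ substSet u (R2.body \ B2'), substSet u R2.head⟩
  else
    ⟨substSet u R1.body ∪ substSet u (R2.body \ B2'),
     substSet u R1.head ∪ substSet u R2.head⟩

/-- The closure `R*` of a rule set under existential composition. -/
inductive InClosure (𝒮 : Set Rule) : Rule → Prop
  | base {R : Rule} : R ∈ 𝒮 → InClosure 𝒮 R
  | comp {Ri Rj : Rule} {B' H' : Set Atom} {u : ℕ → Term} :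
      InClosure 𝒮 Ri → InClosure 𝒮 Rj →
      IsPieceUnifier Ri.body Rj B' H' u → InClosure 𝒮 (compose Ri Rj B' u)

def ruleSet (L : List Rule) : Set Rule := {R | R ∈ L}

/-- The stability property for a (possibly infinite) rule set. -/
def StableSet (𝒮 : Set Rule) : Prop :=
  ∀ R1 ∈ 𝒮, ∀ R2 ∈ 𝒮, ∀ B2' H1' u,
    IsPieceUnifier R2.body R1 B2' H1' u → StableUnifier R2 R1 B2' u

/-- `J` is a result of one breadth-first chase step of a (possibly infinite) rule set on `I`,
with fresh pairwise-compatible nulls (semi-oblivious naming). -/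
def OneStepResult (𝒮 : Set Rule) (I J : Set Atom) : Prop :=
  ∃ ν : Rule → (ℕ → Term) → ℕ → ℕ,
    (∀ R ∈ 𝒮, ∀ f x, Term.var (ν R f x) ∉ termsOf I) ∧
    (∀ R ∈ 𝒮, ∀ R' ∈ 𝒮, ∀ f f' x x', ν R f x = ν R' f' x' →
        R = R' ∧ restrict f R.frontier = restrict f' R'.frontier ∧ x = x') ∧
    J = I ∪ {a | ∃ R ∈ 𝒮, ∃ π : ℕ → Term, isHom π R.body I ∧
                  a ∈ substSet (safeSub ν R π) R.head}

/-- `I, R ⊨ q` for a Boolean conjunctive query `q` (a set of atoms). -/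
def Entails (L : List Rule) (I q : Set Atom) : Prop :=
  ∀ ν, SONaming L ν → ∃ k σ, isHom σ q (chaseF ν L I k)

/-- The null `t` occurs in at least `n` atoms of `S`. -/
def occursInAtLeast (S : Set Atom) (t : Term) (n : ℕ) : Prop :=
  ∃ F : Set Atom, F ⊆ {a | a ∈ S ∧ t ∈ a.terms} ∧ F.Finite ∧ n ≤ F.ncard

def FrontierGuarded (R : Rule) : Prop := ∃ a ∈ R.body, R.frontier ⊆ a.vars

def IsDatalog (R : Rule) : Prop := R.exist = ∅ ∧ ∃ a, R.head = {a}

end ER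

/-! Read with valuations, the existential composition gives, for each value of `x1', y1`, one
solution of the composed body together with a witness for its head. The witness's values on `z1`
serve every other solution with the same `x1', y1`, since `u(H1)` only mentions `z1` and variables
of `u(B1)`, none of which lies in `x2' ∪ y2'`. If `u(H2)` avoids `z1`, it is satisfied by the
witness for the current solution, whose values on `z2` combine freely with the first witness's
values on `z1`. If instead the frontier of `R2` lies in `Var(B2')`, the whole head avoids
`x2' ∪ y2'` and the first witness satisfies all of it. -/

namespace ER

section QuantifierBlocks

variable {ι α : Type*}

/- `HoldsAE B Φ A` is `∀ A (B → ∃ Φ)` with `A` the variables of `B`, and `HoldsAEAE B Φ E₁ Y E₂` is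
`∀ ∃E₁ ∀Y (B → ∃E₂ Φ)`: each valuation may differ from the previous one only on the block of
variables it quantifies. -/
def HoldsAE (B Φ : (ι → α) → Prop) (A : Set ι) : Prop :=
  ∀ v : ι → α, B v → ∃ w : ι → α, (∀ x ∈ A, w x = v x) ∧ Φ w

def HoldsAEAE (B Φ : (ι → α) → Prop) (E₁ Y E₂ : Set ι) : Prop :=
  ∀ v₀ : ι → α, ∃ v₁ : ι → α, (∀ x, x ∉ E₁ → v₁ x = v₀ x) ∧
    ∀ v₂ : ι → α, (∀ x, x ∉ Y → v₂ x = v₁ x) → B v₂ →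
      ∃ v₃ : ι → α, (∀ x, x ∉ E₂ → v₃ x = v₂ x) ∧ Φ v₃

variable {B Φ : (ι → α) → Prop} {A E₁ E₂ Y : Set ι}

open Set

theorem HoldsAEAE.holdsAE (hB : DependsOn B A) (hA₁ : Disjoint A E₁) (hA₂ : Disjoint A E₂)
    (h : HoldsAEAE B Φ E₁ Y E₂) : HoldsAE B Φ A := by
  unfold HoldsAEAE at h
  intro v hv
  obtain ⟨v₁, hv₁, h⟩ := h v
  have hv₂ : ∀ x ∈ A, Y.piecewise v v₁ x = v x := by
    intro x hx
    by_cases hY : x ∈ Y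
    · exact piecewise_eq_of_mem _ _ _ hY
    · rw [piecewise_eq_of_notMem _ _ _ hY, hv₁ x (hA₁.notMem_of_mem_left hx)]
  obtain ⟨v₃, hv₃, hΦ⟩ :=
    h _ (fun x hx => piecewise_eq_of_notMem _ _ _ hx) ((hB fun x hx => (hv₂ x hx).symm).mp hv)
  exact ⟨v₃, fun x hx => (hv₃ x (hA₂.notMem_of_mem_left hx)).trans (hv₂ x hx), hΦ⟩

theorem HoldsAE.exists_uniform (hA₁ : Disjoint A E₁) (hY₁ : Disjoint Y E₁)
    (h : HoldsAE B Φ A) (v₀ : ι → α) :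
    ∃ v₁ : ι → α, (∀ x, x ∉ E₁ → v₁ x = v₀ x) ∧
      ∀ v₂ : ι → α, (∀ x, x ∉ Y → v₂ x = v₁ x) → B v₂ →
        ∃ w, (∀ x ∈ E₁ ∪ (A \ Y), w x = v₂ x) ∧ Φ w := by
  by_cases hsol : ∃ v, (∀ x, x ∉ Y → v x = v₀ x) ∧ B v
  · obtain ⟨v, hv, hBv⟩ := hsol
    obtain ⟨w, hw, hΦ⟩ := h v hBv
    refine ⟨E₁.piecewise w v₀, fun x hx => piecewise_eq_of_notMem _ _ _ hx,
      fun v₂ hv₂ _ => ⟨w, ?_, hΦ⟩⟩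
    rintro x (hx | ⟨hxA, hxY⟩)
    · rw [hv₂ x (hY₁.notMem_of_mem_right hx), piecewise_eq_of_mem _ _ _ hx]
    · rw [hv₂ x hxY, piecewise_eq_of_notMem _ _ _ (hA₁.notMem_of_mem_left hxA), hw x hxA,
        hv x hxY]
  · exact ⟨v₀, fun _ _ => rfl, fun v₂ hv₂ hB => absurd ⟨v₂, hv₂, hB⟩ hsol⟩

theorem HoldsAE.holdsAEAE_of_dependsOn (hΦ : DependsOn Φ (E₁ ∪ E₂ ∪ (A \ Y)))
    (hA₁ : Disjoint A E₁) (hY₁ : Disjoint Y E₁) (h : HoldsAE B Φ A) :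
    HoldsAEAE B Φ E₁ Y E₂ := by
  unfold HoldsAEAE
  intro v₀
  obtain ⟨v₁, hv₁, hunif⟩ := h.exists_uniform hA₁ hY₁ v₀
  refine ⟨v₁, hv₁, fun v₂ hv₂ hB => ?_⟩
  obtain ⟨w, hw, hΦw⟩ := hunif v₂ hv₂ hB
  refine ⟨E₂.piecewise w v₂, fun x hx => piecewise_eq_of_notMem _ _ _ hx, (hΦ ?_).mp hΦw⟩
  intro x hx
  by_cases h₂ : x ∈ E₂
  · rw [piecewise_eq_of_mem _ _ _ h₂]
  · rw [piecewise_eq_of_notMem _ _ _ h₂]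
    rcases hx with (hx | hx) | hx
    exacts [hw x (Or.inl hx), absurd hx h₂, hw x (Or.inr hx)]

theorem HoldsAE.holdsAEAE_of_dependsOn_and {H K : (ι → α) → Prop} (hΦHK : ∀ v, Φ v ↔ H v ∧ K v)
    (hH : DependsOn H (E₁ ∪ (A \ Y))) (hK : DependsOn K (A ∪ E₂))
    (hA₁ : Disjoint A E₁) (hA₂ : Disjoint A E₂) (hY₁ : Disjoint Y E₁) (h₁₂ : Disjoint E₁ E₂)
    (h : HoldsAE B Φ A) : HoldsAEAE B Φ E₁ Y E₂ := by
  have hunif := h.exists_uniform hA₁ hY₁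
  unfold HoldsAE at h
  unfold HoldsAEAE
  intro v₀
  obtain ⟨v₁, hv₁, hunif⟩ := hunif v₀
  refine ⟨v₁, hv₁, fun v₂ hv₂ hB => ?_⟩
  obtain ⟨w₁, hw₁, hΦw₁⟩ := hunif v₂ hv₂ hB
  obtain ⟨w₂, hw₂, hΦw₂⟩ := h v₂ hB
  refine ⟨E₂.piecewise w₂ v₂, fun x hx => piecewise_eq_of_notMem _ _ _ hx,
    (hΦHK _).mpr ⟨(hH ?_).mp ((hΦHK w₁).mp hΦw₁).1, (hK ?_).mp ((hΦHK w₂).mp hΦw₂).2⟩⟩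
  · rintro x (hx | hx)
    · rw [piecewise_eq_of_notMem _ _ _ (h₁₂.notMem_of_mem_left hx), hw₁ x (Or.inl hx)]
    · rw [piecewise_eq_of_notMem _ _ _ (hA₂.notMem_of_mem_left hx.1), hw₁ x (Or.inr hx)]
  · rintro x (hx | hx)
    · rw [piecewise_eq_of_notMem _ _ _ (hA₂.notMem_of_mem_left hx), hw₂ x hx]
    · rw [piecewise_eq_of_mem _ _ _ hx]

end QuantifierBlocks

section Atoms

theorem mem_varsOf {S : Set Atom} {y : ℕ} : y ∈ varsOf S ↔ ∃ a ∈ S, y ∈ a.vars := by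
  simp [varsOf]

theorem varsOf_union (S T : Set Atom) : varsOf (S ∪ T) = varsOf S ∪ varsOf T :=
  Set.biUnion_union S T Atom.vars

theorem varsOf_mono {S T : Set Atom} (h : S ⊆ T) : varsOf S ⊆ varsOf T :=
  Set.biUnion_subset_biUnion_left h

theorem substSet_union (u : ℕ → Term) (S T : Set Atom) :
    substSet u (S ∪ T) = substSet u S ∪ substSet u T :=
  Set.image_union _ S T

theorem Atom.mem_vars_subst {u : ℕ → Term} {a : Atom} {y : ℕ} :
    y ∈ (a.subst u).vars ↔ ∃ x ∈ a.vars, u x = Term.var y := by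
  simp only [Atom.vars, Atom.subst, Set.mem_ofPred_eq, List.mem_map]
  constructor
  · rintro ⟨(c | x), ht, h⟩
    · exact absurd h (by simp [Term.subst])
    · exact ⟨x, ht, h⟩
  · rintro ⟨x, hx, h⟩
    exact ⟨Term.var x, hx, h⟩

theorem mem_varsOf_substSet {u : ℕ → Term} {S : Set Atom} {y : ℕ} :
    y ∈ varsOf (substSet u S) ↔ ∃ x ∈ varsOf S, u x = Term.var y := by
  simp only [mem_varsOf, substSet, Set.exists_mem_image, Atom.mem_vars_subst]
  aesop

theorem dependsOn_holdsAll (M : Struct) (S : Set Atom) :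
    DependsOn (fun v : ℕ → M.D => ∀ a ∈ S, holdsA M v a) (varsOf S) := by
  intro v w hvw
  refine propext (forall₂_congr fun a ha => ?_)
  suffices a.args.map (evalT M v) = a.args.map (evalT M w) by rw [holdsA, holdsA, this]
  refine List.map_congr_left fun t ht => ?_
  cases t with
  | const c => rfl
  | var x => exact hvw x (mem_varsOf.2 ⟨a, ha, ht⟩)

end Atoms

namespace IsPieceUnifier

variable {S S' H' : Set Atom} {R : Rule} {u : ℕ → Term}

theorem disjoint_body (hu : IsPieceUnifier S R S' H' u) : Disjoint (varsOf S) (varsOf R.body) :=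
  hu.1.mono_right (varsOf_mono Set.subset_union_left)

theorem disjoint_head (hu : IsPieceUnifier S R S' H' u) : Disjoint (varsOf S) (varsOf R.head) :=
  hu.1.mono_right (varsOf_mono Set.subset_union_right)

theorem varsOf_piece_subset (hu : IsPieceUnifier S R S' H' u) : varsOf S' ⊆ varsOf S :=
  varsOf_mono hu.2.2.1

theorem eq_var_of_notMem (hu : IsPieceUnifier S R S' H' u) {x : ℕ} (hR : x ∉ R.frontier)
    (hS' : x ∉ varsOf S') : u x = Term.var x :=
  hu.2.2.2.2.1 x (by rintro (h | h) <;> contradiction)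

theorem varsOf_substSet_body_subset (hu : IsPieceUnifier S R S' H' u) :
    varsOf (substSet u R.body) ⊆ varsOf R.body := by
  intro y hy
  obtain ⟨x, hx, hxy⟩ := mem_varsOf_substSet.1 hy
  by_cases hxR : x ∈ R.frontier
  · obtain ⟨-, -, -, -, -, -, hfr, -, -⟩ := hu
    obtain ⟨z, hz, hxz⟩ := hfr x hxR
    rw [hxz, Term.var.injEq] at hxy
    exact hxy ▸ hz.1
  · have hxS' : x ∉ varsOf S' := fun h =>
      hu.disjoint_body.notMem_of_mem_right hx (hu.varsOf_piece_subset h)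
    rw [hu.eq_var_of_notMem hxR hxS', Term.var.injEq] at hxy
    exact hxy ▸ hx

theorem varsOf_substSet_head_subset (hu : IsPieceUnifier S R S' H' u) :
    varsOf (substSet u R.head) ⊆ R.exist ∪ varsOf (substSet u R.body) := by
  intro y hy
  obtain ⟨x, hx, hxy⟩ := mem_varsOf_substSet.1 hy
  by_cases hxB : x ∈ varsOf R.body
  · exact Or.inr (mem_varsOf_substSet.2 ⟨x, hxB, hxy⟩)
  · have hxS' : x ∉ varsOf S' := fun h =>
      hu.disjoint_head.notMem_of_mem_right hx (hu.varsOf_piece_subset h)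
    rw [hu.eq_var_of_notMem (fun h => hxB h.1) hxS', Term.var.injEq] at hxy
    exact Or.inl (hxy ▸ ⟨hx, hxB⟩)

theorem varsOf_substSet_piece_subset (hu : IsPieceUnifier S R S' H' u) :
    varsOf (substSet u S') ⊆ varsOf (substSet u R.head) := by
  obtain ⟨-, -, -, hH', -, -, -, -, heq⟩ := hu
  rw [heq]
  exact varsOf_mono (Set.image_mono hH')

theorem varsOf_substSet_diff_subset (hu : IsPieceUnifier S R S' H' u) :
    varsOf (substSet u (S \ S')) ⊆ varsOf R.body ∪ varsOf S := by
  intro y hy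
  obtain ⟨x, hx, hxy⟩ := mem_varsOf_substSet.1 hy
  have hxS : x ∈ varsOf S := varsOf_mono Set.sdiff_subset hx
  by_cases hxS' : x ∈ varsOf S'
  · obtain ⟨-, -, -, -, -, -, -, hsep, -⟩ := hu
    obtain ⟨z, hz, hxz⟩ := hsep x ⟨hxS', hx⟩
    rw [hxz, Term.var.injEq] at hxy
    exact Or.inl (hxy ▸ hz.1)
  · have hxR : x ∉ R.frontier := fun h => hu.disjoint_body.notMem_of_mem_left hxS h.1
    rw [hu.eq_var_of_notMem hxR hxS', Term.var.injEq] at hxy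
    exact Or.inr (hxy ▸ hxS)

theorem varsOf_substSet_subset (hu : IsPieceUnifier S R S' H' u) :
    varsOf (substSet u S) ⊆
      R.exist ∪ varsOf (substSet u R.body) ∪ varsOf (substSet u (S \ S')) :=
  calc varsOf (substSet u S) = varsOf (substSet u S') ∪ varsOf (substSet u (S \ S')) := by
        rw [← varsOf_union, ← substSet_union, Set.union_sdiff_cancel hu.2.2.1]
    _ ⊆ _ := Set.union_subset_union_left _
        (hu.varsOf_substSet_piece_subset.trans hu.varsOf_substSet_head_subset)

theorem mem_varsOf_substSet_head {R₂ : Rule} (hu : IsPieceUnifier R₂.body R S' H' u)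
    (hd : Disjoint (varsOf R.body) (varsOf R₂.head)) {y : ℕ}
    (hy : y ∈ varsOf (substSet u R₂.head)) :
    y ∈ R₂.exist ∨ ∃ x ∈ R₂.frontier, u x = Term.var y := by
  obtain ⟨x, hx, hxy⟩ := mem_varsOf_substSet.1 hy
  by_cases hxB : x ∈ varsOf R₂.body
  · exact Or.inr ⟨x, ⟨hxB, hx⟩, hxy⟩
  · have hxR : x ∉ R.frontier := fun h => hd.notMem_of_mem_left h.1 hx
    rw [hu.eq_var_of_notMem hxR (fun h => hxB (hu.varsOf_piece_subset h)), Term.var.injEq] at hxy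
    exact Or.inl (hxy ▸ ⟨hx, hxB⟩)

end IsPieceUnifier

section Composition

variable {R₁ R₂ : Rule} {B₂' H₁' : Set Atom} {u : ℕ → Term}

theorem varsOf_composedBody_subset (hu : IsPieceUnifier R₂.body R₁ B₂' H₁' u) :
    varsOf (substSet u R₁.body ∪ substSet u (R₂.body \ B₂')) ⊆
      varsOf R₁.body ∪ varsOf R₂.body := by
  rw [varsOf_union]
  exact Set.union_subset (hu.varsOf_substSet_body_subset.trans Set.subset_union_left)
    hu.varsOf_substSet_diff_subset

theorem disjoint_composedBody_exist₁ (hu : IsPieceUnifier R₂.body R₁ B₂' H₁' u) :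
    Disjoint (varsOf (substSet u R₁.body ∪ substSet u (R₂.body \ B₂'))) R₁.exist :=
  Disjoint.mono_left (varsOf_composedBody_subset hu) <|
    Set.disjoint_union_left.2
      ⟨Set.disjoint_sdiff_right, hu.disjoint_head.mono_right Set.sdiff_subset⟩

theorem disjoint_composedBody_exist₂ (hu : IsPieceUnifier R₂.body R₁ B₂' H₁' u)
    (hd : Disjoint (varsOf R₁.body) (varsOf R₂.head)) :
    Disjoint (varsOf (substSet u R₁.body ∪ substSet u (R₂.body \ B₂'))) R₂.exist :=
  Disjoint.mono_left (varsOf_composedBody_subset hu) <|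
    Set.disjoint_union_left.2 ⟨hd.mono_right Set.sdiff_subset, Set.disjoint_sdiff_right⟩

theorem varsOf_substSet_head₁_subset (hu : IsPieceUnifier R₂.body R₁ B₂' H₁' u) :
    varsOf (substSet u R₁.head) ⊆ R₁.exist ∪
      (varsOf (substSet u R₁.body ∪ substSet u (R₂.body \ B₂')) \
        (varsOf R₂.body \ varsOf B₂')) := by
  refine hu.varsOf_substSet_head_subset.trans
    (Set.union_subset_union_right _ fun y hy => ⟨?_, ?_⟩)
  · rw [varsOf_union]
    exact Or.inl hy
  · exact fun hY => hu.disjoint_body.notMem_of_mem_right (hu.varsOf_substSet_body_subset hy) hY.1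

theorem varsOf_substSet_head₂_subset (hu : IsPieceUnifier R₂.body R₁ B₂' H₁' u)
    (hd : Disjoint (varsOf R₁.body) (varsOf R₂.head))
    (hfr : ∀ x ∈ R₂.frontier, u x ∉ Term.var '' R₁.exist) :
    varsOf (substSet u R₂.head) ⊆
      varsOf (substSet u R₁.body ∪ substSet u (R₂.body \ B₂')) ∪ R₂.exist := by
  intro y hy
  rcases hu.mem_varsOf_substSet_head hd hy with hE | ⟨x, hx, hxy⟩
  · exact Or.inr hE
  · rw [varsOf_union]
    rcases hu.varsOf_substSet_subset (mem_varsOf_substSet.2 ⟨x, hx.1, hxy⟩) with (hE | h) | h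
    · exact absurd ⟨y, hE, hxy.symm⟩ (hfr x hx)
    · exact Or.inl (Or.inl h)
    · exact Or.inl (Or.inr h)

theorem varsOf_composedHead_subset (hu : IsPieceUnifier R₂.body R₁ B₂' H₁' u)
    (hd : Disjoint (varsOf R₁.body) (varsOf R₂.head)) (hfr : R₂.frontier ⊆ varsOf B₂') :
    varsOf (substSet u R₁.head ∪ substSet u R₂.head) ⊆ R₁.exist ∪ R₂.exist ∪
      (varsOf (substSet u R₁.body ∪ substSet u (R₂.body \ B₂')) \
        (varsOf R₂.body \ varsOf B₂')) := by
  have h₁ := varsOf_substSet_head₁_subset hu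
  rw [varsOf_union]
  refine Set.union_subset (h₁.trans (Set.union_subset_union_left _ Set.subset_union_left))
    fun y hy => ?_
  rcases hu.mem_varsOf_substSet_head hd hy with hE | ⟨x, hx, hxy⟩
  · exact Or.inl (Or.inr hE)
  · rcases h₁ (hu.varsOf_substSet_piece_subset (mem_varsOf_substSet.2 ⟨x, hfr hx, hxy⟩))
      with h | h
    exacts [Or.inl (Or.inl h), Or.inr h]

end Composition

theorem compact_eq_existential_composition_general (R1 R2 : Rule)
    (hdisj : Disjoint (varsOf (R1.body ∪ R1.head)) (varsOf (R2.body ∪ R2.head)))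
    (B2' H1' : Set Atom) (u : ℕ → Term)
    (hu : IsPieceUnifier R2.body R1 B2' H1' u)
    (hst : StableUnifier R2 R1 B2' u) :
    ∀ M : Struct,
      (satRule M ⟨substSet u R1.body ∪ substSet u (R2.body \ B2'),
                  substSet u R1.head ∪ substSet u R2.head⟩
       ↔
       ∀ v0 : ℕ → M.D, ∃ v1 : ℕ → M.D,
         (∀ x, x ∉ R1.exist → v1 x = v0 x) ∧
         ∀ v2 : ℕ → M.D, (∀ x, x ∉ (varsOf R2.body \ varsOf B2') → v2 x = v1 x) →
           (∀ a ∈ substSet u R1.body ∪ substSet u (R2.body \ B2'), holdsA M v2 a) →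
           ∃ v3 : ℕ → M.D, (∀ x, x ∉ R2.exist → v3 x = v2 x) ∧
             ∀ a ∈ substSet u R1.head ∪ substSet u R2.head, holdsA M v3 a) := by
  intro M
  rw [varsOf_union, varsOf_union] at hdisj
  have hd : Disjoint (varsOf R1.body) (varsOf R2.head) :=
    hdisj.mono Set.subset_union_left Set.subset_union_right
  have h₁₂ : Disjoint R1.exist R2.exist :=
    hdisj.mono (Set.sdiff_subset.trans Set.subset_union_right)
      (Set.sdiff_subset.trans Set.subset_union_right)
  have hA₁ := disjoint_composedBody_exist₁ hu
  have hA₂ := disjoint_composedBody_exist₂ hu hd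
  have hY₁ : Disjoint (varsOf R2.body \ varsOf B2') R1.exist :=
    hu.disjoint_head.mono Set.sdiff_subset Set.sdiff_subset
  refine ⟨fun h => ?_, HoldsAEAE.holdsAE (dependsOn_holdsAll M _) hA₁ hA₂⟩
  rcases hst with hfr | hfr
  · exact HoldsAE.holdsAEAE_of_dependsOn_and (fun _ => forall₂_or_left)
      ((dependsOn_holdsAll M _).mono (varsOf_substSet_head₁_subset hu))
      ((dependsOn_holdsAll M _).mono (varsOf_substSet_head₂_subset hu hd hfr))
      hA₁ hA₂ hY₁ h₁₂ h
  · exact HoldsAE.holdsAEAE_of_dependsOn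
      ((dependsOn_holdsAll M _).mono (varsOf_composedHead_subset hu hd hfr)) hA₁ hY₁ h

/-- for a piece-unifier satisfying the stability property, the compact
composition `∀x1'∀y1 ∃z1 ∀x2'∀y2' (u(B1) ∧ u(B2\B2') → ∃z2 (u(H1) ∧ u(H2)))` is logically
equivalent to the existential composition, in which all universal quantifiers precede all
existential quantifiers. -/
theorem compact_eq_existential_composition (R1 R2 : Rule) (h1 : WfRule R1) (h2 : WfRule R2)
    (hdisj : Disjoint (varsOf (R1.body ∪ R1.head)) (varsOf (R2.body ∪ R2.head)))
    (B2' H1' : Set Atom) (u : ℕ → Term)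
    (hu : IsPieceUnifier R2.body R1 B2' H1' u)
    (hst : StableUnifier R2 R1 B2' u) :
    ∀ M : Struct,
      (satRule M ⟨substSet u R1.body ∪ substSet u (R2.body \ B2'),
                  substSet u R1.head ∪ substSet u R2.head⟩
       ↔
       ∀ v0 : ℕ → M.D, ∃ v1 : ℕ → M.D,
         (∀ x, x ∉ R1.exist → v1 x = v0 x) ∧
         ∀ v2 : ℕ → M.D, (∀ x, x ∉ (varsOf R2.body \ varsOf B2') → v2 x = v1 x) →
           (∀ a ∈ substSet u R1.body ∪ substSet u (R2.body \ B2'), holdsA M v2 a) →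
           ∃ v3 : ℕ → M.D, (∀ x, x ∉ R2.exist → v3 x = v2 x) ∧
             ∀ a ∈ substSet u R1.head ∪ substSet u R2.head, holdsA M v3 a) :=
  compact_eq_existential_composition_general R1 R2 hdisj B2' H1' u hu hst

end ER
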